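/- Let G be a finite group, B a square matrix over ℤ[G] indexed by V. For each g ∈ G let P_g be the right-regular-representation permutation matrix on G. If the matrix Q := Σ_{g∈G} π_g(B) ⊗ Q_g is nilpotent, where the Q_g are obtained from P_g by restricting to the orthogonal complement of the all-ones vector in ℂ^G (in any fixed basis extending the all-ones vector to a basis of ℂ^G), then B^k has all entries in u_G·ℤ for k equal to the size of Q, namely k = |V|(|G|−1). -/

import Mathlib

open MonoidAlgebra Matrix Kronecker

noncomputable def coeffMat {G V : Type*} [Group G]
    (g : G) (B : Matrix V V (MonoidAlgebra ℤ G)) : Matrix V V ℤ :=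
  fun i j => (B i j).coeff g

noncomputable def uG (G : Type*) [Group G] [Fintype G] : MonoidAlgebra ℤ G :=
  ∑ g : G, single g 1

/-- The complex permutation matrix of right multiplication by `g`. -/
def permMatC (G : Type*) [Group G] [DecidableEq G] (g : G) : Matrix G G ℂ :=
  fun h k => if k = h * g then 1 else 0

/-!
Extend `g ↦ F⁻¹ P_g F` to an algebra map `φ : ℤ[G] → M_G(ℂ)` and apply it blockwise, giving an
algebra map `Φ : M_V(ℤ[G]) → M_{V×G}(ℂ)`. Since column `1` of every `F⁻¹ P_g F` vanishes below the
corner, the rows of `Φ B` indexed by `V × (G ∖ {1})` are supported on the same columns, where they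
form `Q = Σ_g π_g(B) ⊗ Q_g`. So these rows of `Φ (B ^ k) = (Φ B) ^ k` are those of `Q ^ k`, padded
by zeros, and they vanish for `k = |V|(|G| - 1)` because `Q` is nilpotent. Thus every entry `x` of
`B ^ k` has `φ x` zero outside row `1`; conjugating back with `F`, whose column `1` is `𝟙_G`, the
regular representation of `x` has all rows equal, i.e. all coefficients of `x` agree.
-/

namespace Matrix

variable {ι κ R : Type*} [Fintype ι] [DecidableEq ι]

theorem pow_card_eq_zero_of_isNilpotent [CommRing R] [IsReduced R] {M : Matrix ι ι R}
    (hM : IsNilpotent M) : M ^ Fintype.card ι = 0 := by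
  have hchar : M.charpoly = Polynomial.X ^ Fintype.card ι := by
    rw [← sub_eq_zero]
    ext i
    exact (Polynomial.isNilpotent_iff.mp (isNilpotent_charpoly_sub_pow_of_isNilpotent hM) i).eq_zero
  simpa [hchar] using M.aeval_self_charpoly

theorem pow_submatrix_id_eq_pow_submatrix_mul [Semiring R] [Fintype κ] [DecidableEq κ]
    {e : κ → ι} (he : Function.Injective e) {M : Matrix ι ι R}
    (hM : ∀ x p, p ∉ Set.range e → M (e x) p = 0) (k : ℕ) :
    (M ^ k).submatrix e id = M.submatrix e e ^ k * (1 : Matrix ι ι R).submatrix e id := by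
  have hrows : M.submatrix e id = M.submatrix e e * (1 : Matrix ι ι R).submatrix e id := by
    ext x p
    simp only [submatrix_apply, id_eq, mul_apply, one_apply]
    by_cases hp : p ∈ Set.range e
    · obtain ⟨y, rfl⟩ := hp
      simp [he.eq_iff]
    · simp [hM x p hp, show ∀ z, e z ≠ p from fun z hz => hp ⟨z, hz⟩]
  have hE : (1 : Matrix ι ι R).submatrix e id * M = M.submatrix e id := by
    simpa using one_submatrix_mul e (Equiv.refl ι) M
  induction k with
  | zero => simp
  | succ k ih =>
    rw [pow_succ, submatrix_mul _ _ _ id _ Function.bijective_id, submatrix_id_id, ih,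
      Matrix.mul_assoc, hE, hrows, pow_succ, Matrix.mul_assoc]

theorem apply_eq_apply_of_inv_mul_mul_apply_eq_zero [CommRing R] {F X : Matrix ι ι R}
    (hF : IsUnit F.det) {i₀ : ι} (hFone : ∀ i, F i i₀ = 1)
    (hX : ∀ i, i ≠ i₀ → ∀ j, (F⁻¹ * X * F) i j = 0) (i j : ι) : X i j = X i₀ j := by
  set Y := F⁻¹ * X * F
  have hXY : X = F * Y * F⁻¹ := by
    simp only [Y, ← mul_assoc, mul_nonsing_inv F hF, one_mul]
    rw [mul_assoc, mul_nonsing_inv F hF, mul_one]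
  have hFY : ∀ i j, (F * Y) i j = Y i₀ j := fun i j => by
    rw [mul_apply, Finset.sum_eq_single i₀ (fun t _ ht => by rw [hX t ht, mul_zero]) (by simp),
      hFone, one_mul]
  simp only [hXY, mul_apply, hFY]

end Matrix

section RegularRepresentation

variable (G : Type*) [Group G] [DecidableEq G]

theorem permMatC_eq_toMatrix (g : G) : permMatC G g = (Equiv.mulRight g).toPEquiv.toMatrix := by
  ext h k
  simp [permMatC, PEquiv.toMatrix_apply, eq_comm]

variable [Fintype G]

def permMatHom : G →* Matrix G G ℂ where
  toFun := permMatC G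
  map_one' := by
    ext h k
    simp [permMatC, one_apply, eq_comm]
  map_mul' g g' := by
    simp only [permMatC_eq_toMatrix, ← PEquiv.toMatrix_trans, ← Equiv.toPEquiv_trans]
    congr
    ext h
    simp [mul_assoc]

noncomputable def regularRep : MonoidAlgebra ℤ G →ₐ[ℤ] Matrix G G ℂ :=
  lift ℤ (Matrix G G ℂ) G (permMatHom G)

variable {G}

theorem regularRep_eq_sum (x : MonoidAlgebra ℤ G) :
    regularRep G x = ∑ g : G, (x.coeff g : ℂ) • permMatC G g := by
  rw [regularRep, lift_apply, Finsupp.sum_fintype _ _ (by simp)]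
  simp [permMatHom, Int.cast_smul_eq_zsmul]

theorem regularRep_apply (x : MonoidAlgebra ℤ G) (h k : G) :
    regularRep G x h k = x.coeff (h⁻¹ * k) := by
  simp [regularRep_eq_sum, Matrix.sum_apply, permMatC, ← inv_mul_eq_iff_eq_mul]

theorem exists_eq_zsmul_uG_of_regularRep_apply_eq {x : MonoidAlgebra ℤ G}
    (hx : ∀ h k, regularRep G x h k = regularRep G x 1 k) : ∃ c : ℤ, x = c • uG G := by
  refine ⟨x.coeff 1, ?_⟩
  ext g
  have hg := hx g⁻¹ 1
  simp only [regularRep_apply, inv_inv, mul_one, inv_one, Int.cast_inj] at hg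
  rw [coeff_smul_apply]
  simp [uG, MonoidAlgebra.coeff_sum, Finsupp.single_apply, hg]

end RegularRepresentation

section BlockRepresentation

variable {G V : Type*} [Group G] [Fintype G] [DecidableEq G] [Fintype V] [DecidableEq V]

theorem inv_mul_regularRep_mul_eq_sum (F : Matrix G G ℂ) (x : MonoidAlgebra ℤ G) :
    F⁻¹ * regularRep G x * F = ∑ g : G, (x.coeff g : ℂ) • (F⁻¹ * permMatC G g * F) := by
  simp [regularRep_eq_sum, Matrix.mul_sum, Matrix.sum_mul]

noncomputable def blockRep (F : Matrix G G ℂ) (hF : IsUnit F.det) :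
    Matrix V V (MonoidAlgebra ℤ G) →ₐ[ℤ] Matrix (V × G) (V × G) ℂ :=
  (compAlgEquiv V G ℂ ℤ).toAlgHom.comp
    ((MulSemiringAction.toAlgHom ℤ (Matrix G G ℂ)
      (ConjAct.toConjAct (F.nonsingInvUnit hF)⁻¹)).comp (regularRep G)).mapMatrix

theorem blockRep_apply (F : Matrix G G ℂ) (hF : IsUnit F.det)
    (B : Matrix V V (MonoidAlgebra ℤ G)) (i j : V) (h k : G) :
    blockRep F hF B (i, h) (j, k) = (F⁻¹ * regularRep G (B i j) * F) h k := by
  simp [blockRep, ConjAct.units_smul_def, nonsingInvUnit]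

end BlockRepresentation

theorem pow_entries_in_uG_of_nilpotent {G V : Type*} [Group G] [Fintype G]
    [DecidableEq G] [Fintype V] [DecidableEq V]
    (B : Matrix V V (MonoidAlgebra ℤ G))
    -- a fixed invertible base-change matrix whose column at the index `1 : G`
    -- is the all-ones vector
    (F : Matrix G G ℂ) (hF : IsUnit F.det)
    (hFone : ∀ h : G, F h 1 = 1)
    -- in this basis every `F⁻¹ P_g F` is block triangular with a `1` in the
    -- top-left corner
    (hblock : ∀ g : G, (F⁻¹ * permMatC G g * F) 1 1 = 1 ∧
      ∀ h : G, h ≠ 1 → (F⁻¹ * permMatC G g * F) h 1 = 0)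
    -- the blocks `Q_g` obtained by restricting away the distinguished index
    (Q : ∀ _ : G, Matrix {h : G // h ≠ 1} {h : G // h ≠ 1} ℂ)
    (hQ : ∀ (g : G) (a b : {h : G // h ≠ 1}),
      Q g a b = (F⁻¹ * permMatC G g * F) a.1 b.1)
    -- if `Σ_g π_g(B) ⊗ Q_g` is nilpotent ...
    (hnil : IsNilpotent (∑ g : G,
      ((coeffMat g B).map (Int.cast : ℤ → ℂ)) ⊗ₖ Q g)) :
    -- ... then `B^k ∈ u_G · ℤ` for `k = |V|(|G|-1)`, the size of `Q`
    ∀ i j, ∃ c : ℤ,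
      (B ^ (Fintype.card V * (Fintype.card G - 1))) i j = c • uG G := by
  set e : V × {h : G // h ≠ 1} → V × G := Prod.map id Subtype.val
  have he : Function.Injective e := Function.injective_id.prodMap Subtype.val_injective
  have hsupp : ∀ x p, p ∉ Set.range e → blockRep F hF B (e x) p = 0 := by
    rintro ⟨i, h⟩ ⟨j, k⟩ hp
    obtain rfl : k = 1 := by
      by_contra hk
      exact hp ⟨(j, ⟨k, hk⟩), rfl⟩
    simp [e, blockRep_apply, inv_mul_regularRep_mul_eq_sum, Matrix.sum_apply, (hblock _).2 _ h.2]
  have hcompress : (blockRep F hF B).submatrix e e =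
      ∑ g : G, ((coeffMat g B).map (Int.cast : ℤ → ℂ)) ⊗ₖ Q g := by
    ext ⟨i, a⟩ ⟨j, b⟩
    simp [e, blockRep_apply, inv_mul_regularRep_mul_eq_sum, Matrix.sum_apply, hQ, coeffMat]
  have hcard : Fintype.card (V × {h : G // h ≠ 1}) = Fintype.card V * (Fintype.card G - 1) := by
    simp [Fintype.card_subtype_compl]
  have hvanish :
      (blockRep F hF (B ^ (Fintype.card V * (Fintype.card G - 1)))).submatrix e id = 0 := by
    rw [map_pow, Matrix.pow_submatrix_id_eq_pow_submatrix_mul he hsupp, hcompress, ← hcard,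
      Matrix.pow_card_eq_zero_of_isNilpotent hnil, Matrix.zero_mul]
  intro i j
  refine exists_eq_zsmul_uG_of_regularRep_apply_eq
    (Matrix.apply_eq_apply_of_inv_mul_mul_apply_eq_zero hF hFone fun h hh k => ?_)
  rw [← blockRep_apply]
  exact congr_fun (congr_fun hvanish (i, ⟨h, hh⟩)) (j, k)
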